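/- arXiv:1901.07158 — 2 statements merged into one kernel-verified Lean document; each statement's English description precedes it below -/
import Mathlib

section
/- Let dim(·|·) be a bivariant Sylvester module rank function for a unital ring R. Let (M_j, β_{jk}) be a direct system of R-modules over a directed set J with direct limit M_∞, and let M be an R-module with compatible maps α_j : M → M_j and α_∞ : M → M_∞. If dim(im(α_i)|M_i) < +∞ for some i ∈ J, then dim(im(α_∞)|M_∞) = lim_j dim(im(α_j)|M_j) = inf_j dim(im(α_j)|M_j). -/
universe u
open scoped NNReal ENNReal

/-- A bivariant Sylvester module rank function for a unital ring `R`: to each pair of left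
`R`-modules `N ⊆ M` (encoded as a submodule `N` of a module `M`) it assigns a value
`d M N ∈ ℝ≥0∞`, thought of as `dim(N|M)`, satisfying isomorphism invariance, normalization,
direct sum additivity, the two continuity conditions, and additivity. -/
structure BivariantSylvesterRank (R : Type u) [Ring R] where
  d : ∀ (M : Type u) [AddCommGroup M] [Module R M], Submodule R M → ℝ≥0∞
  iso_invariant : ∀ (M N : Type u) [AddCommGroup M] [Module R M] [AddCommGroup N] [Module R N]
      (e : M ≃ₗ[R] N) (p : Submodule R M),
      d M p = d N (p.map (e : M →ₗ[R] N))
  d_zero : d PUnit ⊤ = 0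
  d_ring : d R ⊤ = 1
  d_prod : ∀ (M N : Type u) [AddCommGroup M] [Module R M] [AddCommGroup N] [Module R N]
      (p : Submodule R M) (q : Submodule R N),
      d (M × N) (p.prod q) = d M p + d N q
  continuity_sup : ∀ (M : Type u) [AddCommGroup M] [Module R M] (p : Submodule R M),
      d M p = ⨆ (p' : {p' : Submodule R M // p'.FG ∧ p' ≤ p}), d M p'.1
  continuity_inf : ∀ (M : Type u) [AddCommGroup M] [Module R M] (p : Submodule R M), p.FG →
      d M p = ⨅ (q : {q : Submodule R M // q.FG ∧ p ≤ q}), d q.1 (p.comap q.1.subtype)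
  additivity : ∀ (M : Type u) [AddCommGroup M] [Module R M] (p : Submodule R M),
      d M ⊤ = d M p + d (M ⧸ p) ⊤

/-!
Monotonicity of `dim` under homomorphisms makes `j ↦ dim(im α_j|M_j)` antitone and bounded below
by `dim(im α_∞|M_∞)`. For the reverse inequality, pick a f.g. `p ≤ im α_i` with
`dim(im α_i|M_i) ≤ dim(p|M_i) + ε`; additivity over the f.g. `p` shows that the images of `p`
stay `ε`-close to `im α_j` for all `j ≥ i`, so it suffices to treat f.g. submodules. For those,
`dim(p_∞|M_∞)` is computed in a f.g. ambient `Q ≤ M_∞`, which lifts to a f.g. `X ≤ M_k`. Then `Q`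
is `X` modulo the directed union of the kernels of `X → M_j`, and in the finite module `X` the
dimension of that union is approached by the kernels themselves, since each f.g. piece of the
union already dies in some `M_j`.
-/

theorem ENNReal.iInf_le_of_add_le_add {ι : Sort*} [Nonempty ι] {a c : ℝ≥0∞}
    {a' c' : ι → ℝ≥0∞} (ha : a ≠ ⊤) (hsup : a ≤ ⨆ i, a' i) (h : ∀ i, a' i + c' i ≤ a + c) :
    ⨅ i, c' i ≤ c := by
  refine ENNReal.le_of_add_le_add_left ha ?_
  calc a + ⨅ i, c' i ≤ (⨆ i, a' i) + ⨅ i, c' i := add_le_add_left hsup _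
    _ = ⨆ i, (a' i + ⨅ j, c' j) := ENNReal.iSup_add _
    _ ≤ ⨆ i, (a' i + c' i) := iSup_mono fun i => add_le_add_right (iInf_le _ i) _
    _ ≤ a + c := iSup_le h

namespace Submodule

variable {R M N : Type*} [Semiring R] [AddCommMonoid M] [Module R M] [AddCommMonoid N]
  [Module R N]

theorem FG.exists_le_of_directed {ι : Type*} [Nonempty ι] {P : ι → Submodule R M}
    (hP : Directed (· ≤ ·) P) {Q : Submodule R M} (hQ : Q.FG) (h : Q ≤ ⨆ i, P i) :
    ∃ i, Q ≤ P i := by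
  rw [fg_iff_compact, CompleteLattice.isCompactElement_iff_le_of_directed_sSup_le] at hQ
  obtain ⟨_, ⟨i, rfl⟩, hi⟩ :=
    hQ (Set.range P) (Set.range_nonempty P) hP.directedOn_range (by rwa [sSup_range])
  exact ⟨i, hi⟩

theorem FG.exists_fg_le_of_le_map (φ : M →ₗ[R] N) {p : Submodule R M} {Q : Submodule R N}
    (hQ : Q.FG) (h : Q ≤ p.map φ) : ∃ P : Submodule R M, P.FG ∧ P ≤ p ∧ Q ≤ P.map φ := by
  induction Q, hQ using fg_induction with
  | singleton x =>
    obtain ⟨y, hy, rfl⟩ := (span_singleton_le_iff_mem _ _).1 h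
    exact ⟨R ∙ y, fg_span_singleton y, (span_singleton_le_iff_mem _ _).2 hy,
      by rw [map_span, Set.image_singleton]⟩
  | sup Q₁ Q₂ _ _ ih₁ ih₂ =>
    obtain ⟨P₁, hP₁, hP₁p, hQP₁⟩ := ih₁ (le_sup_left.trans h)
    obtain ⟨P₂, hP₂, hP₂p, hQP₂⟩ := ih₂ (le_sup_right.trans h)
    exact ⟨P₁ ⊔ P₂, hP₁.sup hP₂, sup_le hP₁p hP₂p, by rw [map_sup]; exact sup_le_sup hQP₁ hQP₂⟩

end Submodule

namespace BivariantSylvesterRank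

variable {R : Type u} [Ring R] (dim : BivariantSylvesterRank R)
variable {M N : Type u} [AddCommGroup M] [Module R M] [AddCommGroup N] [Module R N]

theorem dim_mono {p p' : Submodule R M} (h : p ≤ p') : dim.d M p ≤ dim.d M p' := by
  rw [dim.continuity_sup M p, dim.continuity_sup M p']
  exact iSup_le fun q => le_iSup_of_le ⟨q.1, q.2.1, q.2.2.trans h⟩ le_rfl

theorem dim_top_congr (e : M ≃ₗ[R] N) : dim.d M ⊤ = dim.d N ⊤ := by
  rw [dim.iso_invariant M N e ⊤, Submodule.map_top, LinearEquiv.range]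

theorem dim_quotient_top_le (p : Submodule R M) : dim.d (M ⧸ p) ⊤ ≤ dim.d M ⊤ := by
  rw [dim.additivity M p]
  exact le_add_self

theorem dim_top_le_of_surjective {φ : M →ₗ[R] N} (hφ : Function.Surjective φ) :
    dim.d N ⊤ ≤ dim.d M ⊤ := by
  rw [← dim.dim_top_congr (φ.quotKerEquivOfSurjective hφ)]
  exact dim.dim_quotient_top_le _

theorem dim_pi_fin_le (n : ℕ) : dim.d (Fin n → R) ⊤ ≤ n := by
  induction n with
  | zero =>
    rw [dim.dim_top_congr (LinearEquiv.ofSubsingleton (Fin 0 → R) PUnit.{u + 1}), dim.d_zero]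
    exact zero_le
  | succ n ih =>
    rw [← dim.dim_top_congr (Fin.consLinearEquiv R fun _ : Fin (n + 1) => R),
      ← Submodule.prod_top, dim.d_prod, dim.d_ring, Nat.cast_succ, add_comm]
    exact add_le_add_left ih 1

theorem dim_top_ne_top [Module.Finite R M] : dim.d M ⊤ ≠ ⊤ := by
  obtain ⟨n, φ, hφ⟩ := Module.Finite.exists_fin' R M
  exact ne_top_of_le_ne_top (ENNReal.natCast_ne_top n)
    ((dim.dim_top_le_of_surjective hφ).trans (dim.dim_pi_fin_le n))

theorem dim_le_dim_comap_subtype {p q : Submodule R M} (hp : p.FG) (hq : q.FG) (hpq : p ≤ q) :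
    dim.d M p ≤ dim.d q (p.comap q.subtype) := by
  rw [dim.continuity_inf M p hp]
  exact iInf_le (fun q' : {q' : Submodule R M // q'.FG ∧ p ≤ q'} =>
    dim.d q'.1 (p.comap q'.1.subtype)) ⟨q, hq, hpq⟩

theorem dim_comap_subtype_anti {p q₁ q₂ : Submodule R M} (hp : p.FG) (hq₁ : q₁.FG)
    (hpq : p ≤ q₁) (hq : q₁ ≤ q₂) :
    dim.d q₂ (p.comap q₂.subtype) ≤ dim.d q₁ (p.comap q₁.subtype) := by
  set e := Submodule.comapSubtypeEquivOfLe hq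
  have hfg : (q₁.comap q₂.subtype).FG := by
    have : Module.Finite R q₁ := Module.Finite.iff_fg.mpr hq₁
    exact Module.Finite.iff_fg.mp (Module.Finite.equiv e.symm)
  have hp' : (p.comap q₂.subtype).FG :=
    Submodule.fg_of_fg_map_injective _ q₂.injective_subtype
      (by rwa [Submodule.map_comap_subtype, inf_eq_right.2 (hpq.trans hq)])
  calc dim.d q₂ (p.comap q₂.subtype)
      ≤ dim.d _ ((p.comap q₂.subtype).comap (q₁.comap q₂.subtype).subtype) :=
        dim.dim_le_dim_comap_subtype hp' hfg (Submodule.comap_mono hpq)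
    _ = dim.d q₁ (p.comap q₁.subtype) := by
        rw [dim.iso_invariant _ _ e]
        congr 1
        ext ⟨x, hx⟩
        simp [e]

theorem additivity_of_dim_top_ne_top (hM : dim.d M ⊤ ≠ ⊤) {p W : Submodule R M} (h : p ≤ W) :
    dim.d M W = dim.d M p + dim.d (M ⧸ p) (W.map p.mkQ) := by
  have hW : dim.d (M ⧸ W) ⊤ ≠ ⊤ := ne_top_of_le_ne_top hM (dim.dim_quotient_top_le W)
  refine (ENNReal.add_left_inj hW).1 ?_
  rw [← dim.additivity M W, dim.additivity M p, dim.additivity (M ⧸ p) (W.map p.mkQ),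
    dim.dim_top_congr (Submodule.quotientQuotientEquivQuotient p W h), add_assoc]

theorem dim_map_mkQ_ker (g : M →ₗ[R] N) (x : Submodule R M) :
    dim.d (M ⧸ LinearMap.ker g) (x.map (LinearMap.ker g).mkQ) =
      dim.d (LinearMap.range g) ((x.map g).comap (LinearMap.range g).subtype) := by
  rw [dim.iso_invariant _ _ g.quotKerEquivRange]
  congr 1
  ext ⟨y, hy⟩
  simp [LinearEquiv.eq_symm_apply, Subtype.ext_iff]

theorem dim_sup_eq [Module.Finite R M] (x K : Submodule R M) :
    dim.d M (x ⊔ K) = dim.d M K + dim.d (M ⧸ K) (x.map K.mkQ) := by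
  rw [dim.additivity_of_dim_top_ne_top dim.dim_top_ne_top le_sup_right, Submodule.map_sup,
    Submodule.mkQ_map_self, sup_bot_eq]

/-- `(M ⧸ p) × (M ⧸ K)` is an extension of `M ⧸ (p ⊔ K)` by the image of `M`. -/
theorem dim_quotient_add_dim_quotient_le [Module.Finite R M] (p K : Submodule R M) :
    dim.d (M ⧸ p) ⊤ + dim.d (M ⧸ K) ⊤ ≤ dim.d M ⊤ + dim.d (M ⧸ (p ⊔ K)) ⊤ := by
  set S := LinearMap.range (p.mkQ.prod K.mkQ)
  set ψ : M →ₗ[R] ((M ⧸ p) × (M ⧸ K)) ⧸ S := S.mkQ ∘ₗ LinearMap.inl R _ _ ∘ₗ p.mkQ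
  have hψ : Function.Surjective ψ := by
    intro z
    obtain ⟨⟨a, b⟩, rfl⟩ := S.mkQ_surjective z
    obtain ⟨x, rfl⟩ := p.mkQ_surjective a
    obtain ⟨y, rfl⟩ := K.mkQ_surjective b
    refine ⟨x - y, (Submodule.Quotient.eq S).2 ⟨-y, ?_⟩⟩
    ext <;> simp
  have hker : p ⊔ K ≤ LinearMap.ker ψ := by
    refine sup_le (fun x hx => ?_) (fun x hx => ?_) <;> simp only [LinearMap.mem_ker, ψ,
      LinearMap.comp_apply, Submodule.mkQ_apply, Submodule.Quotient.mk_eq_zero]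
    · simp only [(Submodule.Quotient.mk_eq_zero p).2 hx, LinearMap.inl_apply]
      exact S.zero_mem
    · exact ⟨x, by ext <;> simp [(Submodule.Quotient.mk_eq_zero K).2 hx]⟩
  have hliftQ : Function.Surjective ((p ⊔ K).liftQ ψ hker) := by
    intro z
    obtain ⟨x, rfl⟩ := hψ z
    exact ⟨Submodule.Quotient.mk x, rfl⟩
  have hS : dim.d _ S ≤ dim.d M ⊤ := by
    calc dim.d _ S ≤ dim.d S (S.comap S.subtype) :=
          dim.dim_le_dim_comap_subtype (Submodule.fg_range _) (Submodule.fg_range _) le_rfl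
      _ = dim.d S ⊤ := by rw [Submodule.comap_subtype_self]
      _ ≤ dim.d M ⊤ := dim.dim_top_le_of_surjective (LinearMap.surjective_rangeRestrict _)
  calc dim.d (M ⧸ p) ⊤ + dim.d (M ⧸ K) ⊤ = dim.d ((M ⧸ p) × (M ⧸ K)) ⊤ := by
        rw [← Submodule.prod_top, dim.d_prod]
    _ = dim.d _ S + dim.d (((M ⧸ p) × (M ⧸ K)) ⧸ S) ⊤ := dim.additivity _ S
    _ ≤ dim.d M ⊤ + dim.d (M ⧸ (p ⊔ K)) ⊤ :=
        add_le_add hS (dim.dim_top_le_of_surjective hliftQ)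

theorem dim_map_mkQ_le [Module.Finite R M] (K p : Submodule R M) :
    dim.d (M ⧸ K) (p.map K.mkQ) ≤ dim.d M p := by
  have hK : dim.d (M ⧸ K) ⊤ = dim.d (M ⧸ K) (p.map K.mkQ) + dim.d (M ⧸ (p ⊔ K)) ⊤ := by
    have hmap : p.map K.mkQ = (p ⊔ K).map K.mkQ := by
      rw [Submodule.map_sup, Submodule.mkQ_map_self, sup_bot_eq]
    rw [dim.additivity _ (p.map K.mkQ), hmap,
      dim.dim_top_congr (Submodule.quotientQuotientEquivQuotient K (p ⊔ K) le_sup_right)]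
  have hfin : dim.d (M ⧸ p) ⊤ + dim.d (M ⧸ (p ⊔ K)) ⊤ ≠ ⊤ :=
    ENNReal.add_ne_top.2 ⟨dim.dim_top_ne_top, dim.dim_top_ne_top⟩
  refine ENNReal.le_of_add_le_add_left hfin ?_
  calc dim.d (M ⧸ p) ⊤ + dim.d (M ⧸ (p ⊔ K)) ⊤ + dim.d (M ⧸ K) (p.map K.mkQ)
      = dim.d (M ⧸ p) ⊤ + dim.d (M ⧸ K) ⊤ := by rw [hK]; ring
    _ ≤ dim.d M ⊤ + dim.d (M ⧸ (p ⊔ K)) ⊤ := dim.dim_quotient_add_dim_quotient_le p K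
    _ = dim.d (M ⧸ p) ⊤ + dim.d (M ⧸ (p ⊔ K)) ⊤ + dim.d M p := by
        rw [dim.additivity M p]; ring

theorem dim_map_le_of_fg (φ : M →ₗ[R] N) {p : Submodule R M} (hp : p.FG) :
    dim.d N (p.map φ) ≤ dim.d M p := by
  rw [dim.continuity_inf M p hp]
  refine le_iInf fun ⟨Q, hQ, hpQ⟩ => ?_
  have : Module.Finite R Q := Module.Finite.iff_fg.mpr hQ
  set g := φ ∘ₗ Q.subtype
  have hpg : (p.comap Q.subtype).map g = p.map φ := by
    rw [Submodule.map_comp, Submodule.map_comap_subtype, inf_eq_right.2 hpQ]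
  calc dim.d N (p.map φ)
      ≤ dim.d (LinearMap.range g) ((p.map φ).comap (LinearMap.range g).subtype) :=
        dim.dim_le_dim_comap_subtype (hp.map φ) (Submodule.fg_range g)
          (hpg ▸ LinearMap.map_le_range)
    _ = dim.d (Q ⧸ LinearMap.ker g) ((p.comap Q.subtype).map (LinearMap.ker g).mkQ) := by
        rw [dim.dim_map_mkQ_ker, hpg]
    _ ≤ dim.d Q (p.comap Q.subtype) := dim.dim_map_mkQ_le _ _

theorem dim_map_le (φ : M →ₗ[R] N) (p : Submodule R M) : dim.d N (p.map φ) ≤ dim.d M p := by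
  rw [dim.continuity_sup N (p.map φ)]
  refine iSup_le fun ⟨p₂, hp₂, hp₂p⟩ => ?_
  obtain ⟨p₁, hp₁, hp₁p, hp₂p₁⟩ := hp₂.exists_fg_le_of_le_map φ hp₂p
  exact (dim.dim_mono hp₂p₁).trans ((dim.dim_map_le_of_fg φ hp₁).trans (dim.dim_mono hp₁p))

theorem dim_quotient_comap_subtype (S p W : Submodule R M) (hW : W ≤ S) :
    dim.d (S ⧸ p.comap S.subtype) ((W.comap S.subtype).map (p.comap S.subtype).mkQ) =
      dim.d (S.map p.mkQ) ((W.map p.mkQ).comap (S.map p.mkQ).subtype) := by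
  have h := dim.dim_map_mkQ_ker (p.mkQ ∘ₗ S.subtype) (W.comap S.subtype)
  rwa [LinearMap.ker_comp, Submodule.ker_mkQ, LinearMap.range_comp, Submodule.range_subtype,
    Submodule.map_comp, Submodule.map_comap_subtype, inf_eq_right.2 hW] at h

theorem dim_add_dim_map_mkQ_le {p W : Submodule R M} (hp : p.FG) (hW : W.FG) (h : p ≤ W) :
    dim.d M p + dim.d (M ⧸ p) (W.map p.mkQ) ≤ dim.d M W := by
  rw [dim.continuity_inf M W hW]
  refine le_iInf fun ⟨q, hq, hWq⟩ => ?_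
  have : Module.Finite R q := Module.Finite.iff_fg.mpr hq
  rw [dim.additivity_of_dim_top_ne_top dim.dim_top_ne_top (Submodule.comap_mono h),
    dim.dim_quotient_comap_subtype q p W hWq]
  exact add_le_add (dim.dim_le_dim_comap_subtype hp hq (h.trans hWq))
    (dim.dim_le_dim_comap_subtype (hW.map _) (hq.map _) (Submodule.map_mono hWq))

theorem dim_le_dim_add_dim_map_mkQ {p W : Submodule R M} (hp : p.FG) (hW : W.FG) (h : p ≤ W) :
    dim.d M W ≤ dim.d M p + dim.d (M ⧸ p) (W.map p.mkQ) := by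
  rw [dim.continuity_inf M p hp, dim.continuity_inf (M ⧸ p) _ (hW.map _), ENNReal.iInf_add]
  refine le_iInf fun ⟨q, hq, hpq⟩ => ?_
  rw [ENNReal.add_iInf]
  refine le_iInf fun ⟨Q, hQ, hWQ⟩ => ?_
  obtain ⟨L, hL, -, hQL⟩ := hQ.exists_fg_le_of_le_map p.mkQ (p := ⊤)
    (by rw [Submodule.map_top, Submodule.range_mkQ]; exact le_top)
  set S := q ⊔ W ⊔ L
  have hS : S.FG := (hq.sup hW).sup hL
  have : Module.Finite R S := Module.Finite.iff_fg.mpr hS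
  have hqS : q ≤ S := le_sup_left.trans le_sup_left
  have hWS : W ≤ S := le_sup_right.trans le_sup_left
  calc dim.d M W ≤ dim.d S (W.comap S.subtype) := dim.dim_le_dim_comap_subtype hW hS hWS
    _ = dim.d S (p.comap S.subtype) +
          dim.d (S.map p.mkQ) ((W.map p.mkQ).comap (S.map p.mkQ).subtype) := by
        rw [dim.additivity_of_dim_top_ne_top dim.dim_top_ne_top (Submodule.comap_mono h),
          dim.dim_quotient_comap_subtype S p W hWS]
    _ ≤ _ := add_le_add (dim.dim_comap_subtype_anti hp hq hpq hqS)
        (dim.dim_comap_subtype_anti (hW.map _) hQ hWQ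
          (hQL.trans (Submodule.map_mono le_sup_right)))

theorem additivity_of_fg {p W : Submodule R M} (hp : p.FG) (h : p ≤ W) :
    dim.d M W = dim.d M p + dim.d (M ⧸ p) (W.map p.mkQ) := by
  have hfg : ∀ W' : Submodule R M, W'.FG → p ≤ W' →
      dim.d M W' = dim.d M p + dim.d (M ⧸ p) (W'.map p.mkQ) := fun W' hW' h' =>
    le_antisymm (dim.dim_le_dim_add_dim_map_mkQ hp hW' h') (dim.dim_add_dim_map_mkQ_le hp hW' h')
  apply le_antisymm
  · rw [dim.continuity_sup M W]
    refine iSup_le fun ⟨W₁, hW₁, hW₁W⟩ => ?_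
    calc dim.d M W₁ ≤ dim.d M (W₁ ⊔ p) := dim.dim_mono le_sup_left
      _ = dim.d M p + dim.d (M ⧸ p) ((W₁ ⊔ p).map p.mkQ) := hfg _ (hW₁.sup hp) le_sup_right
      _ ≤ dim.d M p + dim.d (M ⧸ p) (W.map p.mkQ) := by
          gcongr
          exact dim.dim_mono (Submodule.map_mono (sup_le hW₁W h))
  · have : Nonempty {V : Submodule R (M ⧸ p) // V.FG ∧ V ≤ W.map p.mkQ} :=
      ⟨⟨⊥, Submodule.fg_bot, bot_le⟩⟩
    rw [dim.continuity_sup (M ⧸ p) (W.map p.mkQ), ENNReal.add_iSup]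
    refine iSup_le fun ⟨V, hV, hVW⟩ => ?_
    obtain ⟨W₀, hW₀, hW₀W, hVW₀⟩ := hV.exists_fg_le_of_le_map p.mkQ hVW
    calc dim.d M p + dim.d (M ⧸ p) V ≤ dim.d M p + dim.d (M ⧸ p) ((W₀ ⊔ p).map p.mkQ) := by
          gcongr
          exact dim.dim_mono (hVW₀.trans (Submodule.map_mono le_sup_left))
      _ = dim.d M (W₀ ⊔ p) := (hfg _ (hW₀.sup hp) le_sup_right).symm
      _ ≤ dim.d M W := dim.dim_mono (sup_le hW₀W h)

theorem dim_map_le_dim_map_add {p W : Submodule R M} (hp : p.FG) (h : p ≤ W)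
    (hp_top : dim.d M p ≠ ⊤) {ε : ℝ≥0∞} (hW : dim.d M W ≤ dim.d M p + ε) (φ : M →ₗ[R] N) :
    dim.d N (W.map φ) ≤ dim.d N (p.map φ) + ε := by
  have hε : dim.d (M ⧸ p) (W.map p.mkQ) ≤ ε := by
    rw [dim.additivity_of_fg hp h] at hW
    exact ENNReal.le_of_add_le_add_left hp_top hW
  have hφ : p ≤ (p.map φ).comap φ := Submodule.le_comap_map φ p
  have hmap : (W.map p.mkQ).map (p.mapQ (p.map φ) φ hφ) = (W.map φ).map (p.map φ).mkQ := by
    rw [← Submodule.map_comp, Submodule.mapQ_mkQ, Submodule.map_comp]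
  calc dim.d N (W.map φ)
      = dim.d N (p.map φ) + dim.d (N ⧸ p.map φ) ((W.map φ).map (p.map φ).mkQ) :=
        dim.additivity_of_fg (hp.map φ) (Submodule.map_mono h)
    _ ≤ dim.d N (p.map φ) + dim.d (M ⧸ p) (W.map p.mkQ) := by
        gcongr
        rw [← hmap]
        exact dim.dim_map_le _ _
    _ ≤ dim.d N (p.map φ) + ε := by gcongr

theorem exists_fg_le_dim_map_le_add (φ : M →ₗ[R] N) (p : Submodule R M)
    (hp : dim.d N (p.map φ) ≠ ⊤) {ε : ℝ≥0∞} (hε : ε ≠ 0) :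
    ∃ p' : Submodule R M, p'.FG ∧ p' ≤ p ∧ dim.d N (p.map φ) ≤ dim.d N (p'.map φ) + ε := by
  have : Nonempty {q : Submodule R N // q.FG ∧ q ≤ p.map φ} := ⟨⟨⊥, Submodule.fg_bot, bot_le⟩⟩
  have hlt : dim.d N (p.map φ) < (⨆ q : {q : Submodule R N // q.FG ∧ q ≤ p.map φ},
      dim.d N q.1) + ε := by
    rw [← dim.continuity_sup]
    exact ENNReal.lt_add_right hp hε
  rw [ENNReal.iSup_add] at hlt
  obtain ⟨⟨q, hq, hqp⟩, hlt⟩ := lt_iSup_iff.1 hlt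
  obtain ⟨p', hp', hp'p, hqp'⟩ := hq.exists_fg_le_of_le_map φ hqp
  exact ⟨p', hp', hp'p, hlt.le.trans (by gcongr; exact dim.dim_mono hqp')⟩

theorem iInf_dim_map_mkQ_le [Module.Finite R M] {ι : Type*} [Nonempty ι]
    {K : ι → Submodule R M} (hK : Directed (· ≤ ·) K) (x : Submodule R M) :
    ⨅ i, dim.d (M ⧸ K i) (x.map (K i).mkQ) ≤ dim.d (M ⧸ ⨆ i, K i) (x.map (⨆ i, K i).mkQ) := by
  refine ENNReal.iInf_le_of_add_le_add (a := dim.d M (⨆ i, K i)) (a' := fun i => dim.d M (K i))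
    (ne_top_of_le_ne_top dim.dim_top_ne_top (dim.dim_mono le_top)) ?_ fun i => ?_
  · rw [dim.continuity_sup M (⨆ i, K i)]
    refine iSup_le fun ⟨r, hr, hrK⟩ => ?_
    obtain ⟨i, hi⟩ := hr.exists_le_of_directed hK hrK
    exact le_iSup_of_le i (dim.dim_mono hi)
  · rw [← dim.dim_sup_eq, ← dim.dim_sup_eq]
    exact dim.dim_mono (sup_le_sup_left (le_iSup K i) x)

end BivariantSylvesterRank

namespace Module.DirectLimit

variable {R : Type*} [Semiring R] {ι : Type*} [Preorder ι] [IsDirectedOrder ι] {G : ι → Type*}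
  [∀ i, AddCommMonoid (G i)] [∀ i, Module R (G i)] {f : ∀ i j, i ≤ j → G i →ₗ[R] G j}
  {X : Type*} [AddCommMonoid X] [Module R X] {i : ι}

theorem directed_ker_comp [DirectedSystem G (f · · ·)] (g : X →ₗ[R] G i) :
    Directed (· ≤ ·) fun j : {j // i ≤ j} => LinearMap.ker (f i j j.2 ∘ₗ g) := by
  intro j₁ j₂
  obtain ⟨k, h₁, h₂⟩ := exists_ge_ge j₁.1 j₂.1
  refine ⟨⟨k, j₁.2.trans h₁⟩, ?_, ?_⟩ <;> intro x hx <;>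
    rw [LinearMap.mem_ker, LinearMap.comp_apply] at hx ⊢
  · rw [← DirectedSystem.map_map (f := (f · · ·)) j₁.2 h₁, hx, map_zero]
  · rw [← DirectedSystem.map_map (f := (f · · ·)) j₂.2 h₂, hx, map_zero]

variable [DecidableEq ι]

theorem exists_le_range_of [Nonempty ι] {Q : Submodule R (DirectLimit G f)} (hQ : Q.FG) :
    ∃ i, Q ≤ LinearMap.range (of R ι G f i) := by
  refine hQ.exists_le_of_directed (Monotone.directed_le fun i j hij => ?_) fun z _ => ?_
  · rintro _ ⟨x, rfl⟩
    exact ⟨f i j hij x, of_f⟩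
  · obtain ⟨i, x, rfl⟩ := exists_of z
    exact Submodule.mem_iSup_of_mem i ⟨x, rfl⟩

theorem ker_of_comp_eq_iSup [DirectedSystem G (f · · ·)] (g : X →ₗ[R] G i) :
    LinearMap.ker (of R ι G f i ∘ₗ g) = ⨆ j : {j // i ≤ j}, LinearMap.ker (f i j j.2 ∘ₗ g) := by
  refine le_antisymm (fun x hx => ?_) (iSup_le fun j x hx => ?_)
  · obtain ⟨j, hij, hj⟩ := of.zero_exact hx
    exact Submodule.mem_iSup_of_mem ⟨j, hij⟩ hj
  · rw [LinearMap.mem_ker, LinearMap.comp_apply] at hx ⊢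
    rw [← of_f (hij := j.2), hx, map_zero]

end Module.DirectLimit

namespace BivariantSylvesterRank

variable {R : Type u} [Ring R] (dim : BivariantSylvesterRank R)
variable {M : Type u} [AddCommGroup M] [Module R M]
  {J : Type u} [Preorder J] {G : J → Type u} [∀ j, AddCommGroup (G j)] [∀ j, Module R (G j)]
  {f : ∀ i j, i ≤ j → G i →ₗ[R] G j}

theorem antitone_dim_map {α : ∀ j, M →ₗ[R] G j} (hcompat : ∀ i j h, f i j h ∘ₗ α i = α j)
    (p : Submodule R M) : Antitone fun j => dim.d (G j) (p.map (α j)) := by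
  intro i j hij
  dsimp only
  rw [← hcompat i j hij, Submodule.map_comp]
  exact dim.dim_map_le _ _

variable [DecidableEq J]

theorem dim_map_lim_le {α : ∀ j, M →ₗ[R] G j} {αlim : M →ₗ[R] Module.DirectLimit G f}
    (hcompat' : ∀ j, Module.DirectLimit.of R J G f j ∘ₗ α j = αlim) (p : Submodule R M) (j : J) :
    dim.d _ (p.map αlim) ≤ dim.d (G j) (p.map (α j)) := by
  rw [← hcompat' j, Submodule.map_comp]
  exact dim.dim_map_le _ _

variable [IsDirected J (· ≤ ·)] [DirectedSystem G (fun i j h => f i j h)]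

open Module.DirectLimit in
theorem iInf_dim_map_le_of_fg [Nonempty J] (α : ∀ j, M →ₗ[R] G j)
    (αlim : M →ₗ[R] Module.DirectLimit G f) (hcompat : ∀ i j h, f i j h ∘ₗ α i = α j)
    (hcompat' : ∀ j, of R J G f j ∘ₗ α j = αlim) {p : Submodule R M} (hp : p.FG) :
    ⨅ j, dim.d (G j) (p.map (α j)) ≤ dim.d _ (p.map αlim) := by
  rw [dim.continuity_inf _ _ (hp.map αlim)]
  refine le_iInf fun ⟨Q, hQ, hpQ⟩ => ?_
  obtain ⟨k, hk⟩ := exists_le_range_of hQ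
  obtain ⟨P, hP, -, hQP⟩ :=
    hQ.exists_fg_le_of_le_map (of R J G f k) (p := ⊤) (by rwa [Submodule.map_top])
  set X := P ⊔ p.map (α k)
  have : Module.Finite R X := Module.Finite.iff_fg.mpr (hP.sup (hp.map _))
  have : Nonempty {j // k ≤ j} := ⟨⟨k, le_rfl⟩⟩
  set x := (p.map (α k)).comap X.subtype
  have hx : ∀ {N : Type u} [AddCommGroup N] [Module R N] (g : G k →ₗ[R] N),
      x.map (g ∘ₗ X.subtype) = p.map (g ∘ₗ α k) := by
    intro N _ _ g
    rw [Submodule.map_comp, Submodule.map_comap_subtype, inf_eq_right.2 le_sup_right,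
      ← Submodule.map_comp]
  set g := of R J G f k ∘ₗ X.subtype
  have hQg : Q ≤ LinearMap.range g := by
    rw [LinearMap.range_comp, Submodule.range_subtype]
    exact hQP.trans (Submodule.map_mono le_sup_left)
  calc ⨅ j, dim.d (G j) (p.map (α j))
      ≤ ⨅ j : {j // k ≤ j}, dim.d (X ⧸ LinearMap.ker (f k j j.2 ∘ₗ X.subtype))
          (x.map (LinearMap.ker (f k j j.2 ∘ₗ X.subtype)).mkQ) := by
        refine le_iInf fun j => (iInf_le _ j.1).trans ?_
        have h := dim.dim_map_le ((LinearMap.ker (f k j j.2 ∘ₗ X.subtype)).liftQ _ le_rfl)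
          (x.map (LinearMap.ker (f k j j.2 ∘ₗ X.subtype)).mkQ)
        rwa [← Submodule.map_comp, Submodule.liftQ_mkQ, hx, hcompat] at h
    _ ≤ dim.d (X ⧸ LinearMap.ker g) (x.map (LinearMap.ker g).mkQ) := by
        rw [ker_of_comp_eq_iSup]
        exact dim.iInf_dim_map_mkQ_le (directed_ker_comp _) x
    _ = dim.d (LinearMap.range g) ((p.map αlim).comap (LinearMap.range g).subtype) := by
        rw [dim.dim_map_mkQ_ker, hx, hcompat']
    _ ≤ dim.d Q ((p.map αlim).comap Q.subtype) :=
        dim.dim_comap_subtype_anti (hp.map _) hQ hpQ hQg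

theorem iInf_dim_map_le [Nonempty J] (α : ∀ j, M →ₗ[R] G j)
    (αlim : M →ₗ[R] Module.DirectLimit G f) (hcompat : ∀ i j h, f i j h ∘ₗ α i = α j)
    (hcompat' : ∀ j, Module.DirectLimit.of R J G f j ∘ₗ α j = αlim) (p : Submodule R M)
    (hfin : ∃ i, dim.d (G i) (p.map (α i)) ≠ ⊤) :
    ⨅ j, dim.d (G j) (p.map (α j)) ≤ dim.d _ (p.map αlim) := by
  obtain ⟨i, hi⟩ := hfin
  refine ENNReal.le_of_forall_pos_le_add fun ε hε _ => ?_
  obtain ⟨p', hp', hp'p, hε'⟩ :=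
    dim.exists_fg_le_dim_map_le_add (α i) p hi (ENNReal.coe_ne_zero.2 hε.ne')
  have hbound : ∀ j, i ≤ j → dim.d (G j) (p.map (α j)) ≤ dim.d (G j) (p'.map (α j)) + ε := by
    intro j hij
    have h := dim.dim_map_le_dim_map_add (hp'.map _) (Submodule.map_mono hp'p)
      (ne_top_of_le_ne_top hi (dim.dim_mono (Submodule.map_mono hp'p))) hε' (f i j hij)
    rwa [← Submodule.map_comp, ← Submodule.map_comp, hcompat] at h
  calc ⨅ j, dim.d (G j) (p.map (α j)) ≤ (⨅ j, dim.d (G j) (p'.map (α j))) + ε := by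
        rw [ENNReal.iInf_add]
        refine le_iInf fun j => ?_
        obtain ⟨k, hik, hjk⟩ := exists_ge_ge i j
        exact (iInf_le _ k).trans
          ((hbound k hik).trans (by gcongr; exact dim.antitone_dim_map hcompat p' hjk))
    _ ≤ dim.d _ (p'.map αlim) + ε := by
        gcongr
        exact dim.iInf_dim_map_le_of_fg α αlim hcompat hcompat' hp'
    _ ≤ dim.d _ (p.map αlim) + ε := by
        gcongr
        exact dim.dim_mono (Submodule.map_mono hp'p)

end BivariantSylvesterRank

/-- continuity under direct limits. Let `dim(·|·)` be a bivariant
Sylvester module rank function for `R`, let `(G j, f)` be a direct system of `R`-modules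
over a directed set `J` with direct limit `M_∞`, and let `M` be an `R`-module with
compatible maps `α j : M → G j` and `αlim : M → M_∞`. If `dim(im (α i)|G i) < +∞` for some
`i`, then `dim(im αlim|M_∞) = lim_j dim(im (α j)|G j) = inf_j dim(im (α j)|G j)`. -/
theorem bivariantSylvesterRank_directLimit (R : Type u) [Ring R]
    (dim : BivariantSylvesterRank R)
    (J : Type u) [Preorder J] [IsDirected J (· ≤ ·)] [Nonempty J] [DecidableEq J]
    (G : J → Type u) [∀ j, AddCommGroup (G j)] [∀ j, Module R (G j)]
    (f : ∀ i j, i ≤ j → G i →ₗ[R] G j) [DirectedSystem G (fun i j h => f i j h)]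
    (M : Type u) [AddCommGroup M] [Module R M]
    (α : ∀ j, M →ₗ[R] G j) (αlim : M →ₗ[R] Module.DirectLimit G f)
    (hcompat : ∀ (i j : J) (h : i ≤ j), (f i j h).comp (α i) = α j)
    (hcompat' : ∀ j : J, (Module.DirectLimit.of R J G f j).comp (α j) = αlim)
    (hfin : ∃ i : J, dim.d (G i) (LinearMap.range (α i)) < ⊤) :
    (dim.d (Module.DirectLimit G f) (LinearMap.range αlim) =
        ⨅ j : J, dim.d (G j) (LinearMap.range (α j))) ∧
      Filter.Tendsto (fun j : J => dim.d (G j) (LinearMap.range (α j))) Filter.atTop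
        (nhds (dim.d (Module.DirectLimit G f) (LinearMap.range αlim))) := by
  simp only [LinearMap.range_eq_map] at hfin ⊢
  have heq := le_antisymm (le_iInf (dim.dim_map_lim_le hcompat' ⊤))
    (dim.iInf_dim_map_le α αlim hcompat hcompat' ⊤ (hfin.imp fun _ => ne_of_lt))
  refine ⟨heq, ?_⟩
  rw [heq]
  exact tendsto_atTop_iInf (dim.antitone_dim_map hcompat ⊤)
end

section
/- Let rk be an extended Sylvester map rank function for a unital ring R. For any R-module maps α : M₁ → M₃, β : M₂ → M₄, γ : M₁ → M₄, the block upper-triangular map [[α, γ],[0, β]] : M₁ ⊕ M₂ → M₃ ⊕ M₄ satisfies rk([[α, γ],[0, β]]) ≥ rk(α) + rk(β). -/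
universe u
open scoped NNReal ENNReal

/-- An extended Sylvester map rank function for a unital ring `R`: an `ℝ≥0∞`-valued function
on all maps between left `R`-modules, satisfying normalization, submultiplicativity,
direct sum additivity, two continuity conditions with respect to direct limits, and
additivity `rk(id_{M₂}) = rk(α) + rk(id_{coker α})`. -/
structure ExtendedSylvesterMapRank (R : Type u) [Ring R] where
  r : ∀ {M N : Type u} [AddCommGroup M] [Module R M] [AddCommGroup N] [Module R N],
      (M →ₗ[R] N) → ℝ≥0∞
  r_zero : ∀ (M N : Type u) [AddCommGroup M] [Module R M] [AddCommGroup N] [Module R N],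
      r (0 : M →ₗ[R] N) = 0
  r_id_ring : r (LinearMap.id : R →ₗ[R] R) = 1
  r_comp : ∀ {M N P : Type u} [AddCommGroup M] [Module R M] [AddCommGroup N] [Module R N]
      [AddCommGroup P] [Module R P] (α : M →ₗ[R] N) (β : N →ₗ[R] P),
      r (β.comp α) ≤ min (r α) (r β)
  r_prodMap : ∀ {M N P Q : Type u} [AddCommGroup M] [Module R M] [AddCommGroup N] [Module R N]
      [AddCommGroup P] [Module R P] [AddCommGroup Q] [Module R Q]
      (α : M →ₗ[R] N) (β : P →ₗ[R] Q),
      r (α.prodMap β) = r α + r β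
  continuity_from : ∀ (J : Type u) [Preorder J] [IsDirected J (· ≤ ·)] [Nonempty J]
      [DecidableEq J] (G : J → Type u) [∀ j, AddCommGroup (G j)] [∀ j, Module R (G j)]
      (f : ∀ i j, i ≤ j → G i →ₗ[R] G j) [DirectedSystem G (fun i j h => f i j h)]
      (M : Type u) [AddCommGroup M] [Module R M]
      (α : ∀ j, G j →ₗ[R] M) (αlim : Module.DirectLimit G f →ₗ[R] M),
      (∀ (i j : J) (h : i ≤ j), (α j).comp (f i j h) = α i) →
      (∀ j : J, αlim.comp (Module.DirectLimit.of R J G f j) = α j) →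
      Filter.Tendsto (fun j => r (α j)) Filter.atTop (nhds (r αlim))
  continuity_to : ∀ (J : Type u) [Preorder J] [IsDirected J (· ≤ ·)] [Nonempty J]
      [DecidableEq J] (G : J → Type u) [∀ j, AddCommGroup (G j)] [∀ j, Module R (G j)]
      (f : ∀ i j, i ≤ j → G i →ₗ[R] G j) [DirectedSystem G (fun i j h => f i j h)]
      (M : Type u) [AddCommGroup M] [Module R M], Module.Finite R M →
      ∀ (α : ∀ j, M →ₗ[R] G j) (αlim : M →ₗ[R] Module.DirectLimit G f),
      (∀ (i j : J) (h : i ≤ j), (f i j h).comp (α i) = α j) →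
      (∀ j : J, (Module.DirectLimit.of R J G f j).comp (α j) = αlim) →
      Filter.Tendsto (fun j => r (α j)) Filter.atTop (nhds (r αlim))
  additivity : ∀ {M N : Type u} [AddCommGroup M] [Module R M] [AddCommGroup N] [Module R N]
      (α : M →ₗ[R] N),
      r (LinearMap.id : N →ₗ[R] N) =
        r α + r (LinearMap.id : (N ⧸ LinearMap.range α) →ₗ[R] (N ⧸ LinearMap.range α))

/-!
Write `Φ` for the block map and `d(M) = rk(id_M)`. Additivity gives
`d(M₃) + d(M₄) = d(M₃ × M₄) = rk Φ + d(coker Φ)` as well as `d(M₃) = rk α + d(coker α)` and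
`d(M₄) = rk β + d(coker β)`, so the inequality amounts to `d(coker Φ) ≤ d(coker α) + d(coker β)`.
That holds because `M₄ → coker Φ` factors through `coker β`, and its cokernel is a quotient of
`coker α`. Cancelling `d(coker Φ)` needs it to be finite, which is why one first treats finitely
generated modules, reaching the general case through the two continuity axioms: a map is the
direct limit of its restrictions to finitely generated submodules of the domain, and, for a
finitely generated domain, of its corestrictions to finitely generated submodules of the codomain.
-/

namespace LinearMap

variable {R : Type*} [Semiring R] {M₁ M₂ M₃ M₄ N₁ N₂ : Type*}
  [AddCommMonoid M₁] [Module R M₁] [AddCommMonoid M₂] [Module R M₂]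
  [AddCommMonoid M₃] [Module R M₃] [AddCommMonoid M₄] [Module R M₄]
  [AddCommMonoid N₁] [Module R N₁] [AddCommMonoid N₂] [Module R N₂]

def blockTriangular (α : M₁ →ₗ[R] M₃) (β : M₂ →ₗ[R] M₄) (γ : M₁ →ₗ[R] M₄) :
    M₁ × M₂ →ₗ[R] M₃ × M₄ :=
  (α ∘ₗ fst R M₁ M₂).prod (γ ∘ₗ fst R M₁ M₂ + β ∘ₗ snd R M₁ M₂)

variable (α : M₁ →ₗ[R] M₃) (β : M₂ →ₗ[R] M₄) (γ : M₁ →ₗ[R] M₄)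

@[simp]
lemma blockTriangular_apply (x : M₁ × M₂) :
    blockTriangular α β γ x = (α x.1, γ x.1 + β x.2) :=
  rfl

lemma blockTriangular_comp_prodMap (f : N₁ →ₗ[R] M₁) (g : N₂ →ₗ[R] M₂) :
    blockTriangular α β γ ∘ₗ f.prodMap g = blockTriangular (α ∘ₗ f) (β ∘ₗ g) (γ ∘ₗ f) :=
  rfl

end LinearMap

namespace ExtendedSylvesterMapRank

open LinearMap Submodule

variable {R : Type u} [Ring R] (rk : ExtendedSylvesterMapRank R)

def dim (M : Type u) [AddCommGroup M] [Module R M] : ℝ≥0∞ :=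
  rk.r (LinearMap.id : M →ₗ[R] M)

section Basic

variable {M N P : Type u} [AddCommGroup M] [Module R M] [AddCommGroup N] [Module R N]
  [AddCommGroup P] [Module R P]

lemma r_comp_le_left (f : M →ₗ[R] N) (g : N →ₗ[R] P) : rk.r (g ∘ₗ f) ≤ rk.r g :=
  (rk.r_comp f g).trans (min_le_right _ _)

lemma r_comp_le_right (f : M →ₗ[R] N) (g : N →ₗ[R] P) : rk.r (g ∘ₗ f) ≤ rk.r f :=
  (rk.r_comp f g).trans (min_le_left _ _)

lemma r_le_dim_domain (f : M →ₗ[R] N) : rk.r f ≤ rk.dim M :=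
  rk.r_comp_le_right LinearMap.id f

lemma dim_eq_r_add_dim_quotient (f : M →ₗ[R] N) : rk.dim N = rk.r f + rk.dim (N ⧸ range f) :=
  rk.additivity f

lemma r_eq_zero_of_subsingleton [Subsingleton N] (f : M →ₗ[R] N) : rk.r f = 0 := by
  rw [Subsingleton.elim f 0, rk.r_zero]

lemma r_eq_dim_of_surjective {f : M →ₗ[R] N} (hf : Function.Surjective f) :
    rk.r f = rk.dim N := by
  have : Subsingleton (N ⧸ range f) := by
    rw [Submodule.Quotient.subsingleton_iff, range_eq_top.2 hf]
  rw [rk.dim_eq_r_add_dim_quotient f, dim, rk.r_eq_zero_of_subsingleton LinearMap.id, add_zero]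

lemma dim_le_of_surjective {f : M →ₗ[R] N} (hf : Function.Surjective f) :
    rk.dim N ≤ rk.dim M :=
  rk.r_eq_dim_of_surjective hf ▸ rk.r_le_dim_domain f

lemma dim_congr (e : M ≃ₗ[R] N) : rk.dim M = rk.dim N :=
  le_antisymm (rk.dim_le_of_surjective e.symm.surjective) (rk.dim_le_of_surjective e.surjective)

lemma r_comp_linearEquiv (f : N →ₗ[R] P) (e : M ≃ₗ[R] N) : rk.r (f ∘ₗ e.toLinearMap) = rk.r f :=
  le_antisymm (rk.r_comp_le_left _ _) <| by
    simpa [comp_assoc] using rk.r_comp_le_left e.symm.toLinearMap (f ∘ₗ e.toLinearMap)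

lemma r_linearEquiv_comp (f : M →ₗ[R] N) (e : N ≃ₗ[R] P) : rk.r (e.toLinearMap ∘ₗ f) = rk.r f :=
  le_antisymm (rk.r_comp_le_right _ _) <| by
    simpa [← comp_assoc] using rk.r_comp_le_right (e.toLinearMap ∘ₗ f) e.symm.toLinearMap

lemma dim_prod : rk.dim (M × N) = rk.dim M + rk.dim N := by
  rw [dim, ← prodMap_id, rk.r_prodMap]
  rfl

lemma dim_fin_pi (n : ℕ) : rk.dim (Fin n → R) = n := by
  induction n with
  | zero => exact_mod_cast rk.r_eq_zero_of_subsingleton (LinearMap.id : (Fin 0 → R) →ₗ[R] _)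
  | succ n ih =>
    rw [← rk.dim_congr (Fin.consLinearEquiv R fun _ : Fin (n + 1) => R), dim_prod, ih, dim,
      rk.r_id_ring]
    push_cast
    ring

lemma dim_lt_top [Module.Finite R M] : rk.dim M < ⊤ := by
  obtain ⟨n, f, hf⟩ := Module.Finite.exists_fin' R M
  exact (rk.dim_le_of_surjective hf).trans_lt (rk.dim_fin_pi n ▸ ENNReal.natCast_lt_top n)

lemma r_le_dim_quotient_of_le_ker (f : M →ₗ[R] N) {p : Submodule R M} (hp : p ≤ ker f) :
    rk.r f ≤ rk.dim (M ⧸ p) :=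
  p.liftQ_mkQ f hp ▸ rk.r_comp_le_left _ _ |>.trans (rk.r_le_dim_domain _)

lemma dim_le_dim_quotient_of_surjective {f : M →ₗ[R] N} (hf : Function.Surjective f)
    {p : Submodule R M} (hp : p ≤ ker f) : rk.dim N ≤ rk.dim (M ⧸ p) :=
  rk.r_eq_dim_of_surjective hf ▸ rk.r_le_dim_quotient_of_le_ker f hp

end Basic

section Approximation

variable {M N : Type u} [AddCommGroup M] [Module R M] [AddCommGroup N] [Module R N]

instance : Nonempty {P : Submodule R M // P.FG} := ⟨⟨⊥, fg_bot⟩⟩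

lemma r_eq_iSup_fg (f : M →ₗ[R] N) :
    rk.r f = ⨆ P : {P : Submodule R M // P.FG}, rk.r (f ∘ₗ P.1.subtype) := by
  classical
  have hlim := rk.continuity_from _ _ (Module.fgSystem R M) N (fun P => f ∘ₗ P.1.subtype)
    (f ∘ₗ (Module.fgSystem.equiv R M).toLinearMap) (fun _ _ _ => rfl)
    (fun P => by rw [comp_assoc, Module.fgSystem.equiv_comp_of])
  rw [r_comp_linearEquiv] at hlim
  exact tendsto_nhds_unique hlim <| tendsto_atTop_iSup fun P Q hPQ =>
    rk.r_comp_le_left (Submodule.inclusion hPQ) (f ∘ₗ Q.1.subtype)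

lemma r_eq_iInf_fg_codRestrict [Module.Finite R M] (f : M →ₗ[R] N) :
    rk.r f = ⨅ P : {P : Submodule R N // P.FG},
      rk.r (f.codRestrict (P.1 ⊔ range f) fun x => mem_sup_right (mem_range_self f x)) := by
  classical
  let G : {P : Submodule R N // P.FG} → Type u := fun P => ↥(P.1 ⊔ range f)
  let ι : ∀ P Q, P ≤ Q → G P →ₗ[R] G Q := fun P Q h =>
    inclusion (sup_le_sup_right (show P.1 ≤ Q.1 from h) (range f))
  have : DirectedSystem G (fun P Q h => ι P Q h) := ⟨fun _ _ => rfl, fun _ _ _ _ _ _ => rfl⟩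
  let e : Module.DirectLimit G ι ≃ₗ[R] N := .ofBijective
    (Module.DirectLimit.lift R _ G ι (fun P => (P.1 ⊔ range f).subtype) fun _ _ _ _ => rfl)
    ⟨Module.DirectLimit.lift_injective _ _ fun P => (P.1 ⊔ range f).injective_subtype,
      fun x => ⟨Module.DirectLimit.of R _ G ι ⟨_, fg_span_singleton x⟩
        ⟨x, mem_sup_left (mem_span_singleton_self x)⟩, Module.DirectLimit.lift_of ..⟩⟩
  have hlim := rk.continuity_to _ G ι M inferInstance
    (fun P => f.codRestrict (P.1 ⊔ range f) fun x => mem_sup_right (mem_range_self f x))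
    (e.symm.toLinearMap ∘ₗ f) (fun _ _ _ => rfl) (fun P => by
      ext x
      apply e.injective
      simp only [comp_apply, LinearEquiv.coe_coe, LinearEquiv.apply_symm_apply]
      exact Module.DirectLimit.lift_of _ (fun _ _ _ _ => rfl) _)
  rw [r_linearEquiv_comp] at hlim
  exact tendsto_nhds_unique hlim <| tendsto_atTop_iInf fun P Q hPQ =>
    rk.r_comp_le_right _ (ι P Q hPQ)

end Approximation

section BlockTriangular

variable {M₁ M₂ M₃ M₄ : Type u} [AddCommGroup M₁] [Module R M₁] [AddCommGroup M₂] [Module R M₂]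
  [AddCommGroup M₃] [Module R M₃] [AddCommGroup M₄] [Module R M₄]
  (α : M₁ →ₗ[R] M₃) (β : M₂ →ₗ[R] M₄) (γ : M₁ →ₗ[R] M₄)

lemma dim_quotient_range_blockTriangular_le :
    rk.dim ((M₃ × M₄) ⧸ range (blockTriangular α β γ)) ≤
      rk.dim (M₃ ⧸ range α) + rk.dim (M₄ ⧸ range β) := by
  set π := (range (blockTriangular α β γ)).mkQ
  set q := π ∘ₗ inr R M₃ M₄
  have hq : rk.r q ≤ rk.dim (M₄ ⧸ range β) := by
    refine rk.r_le_dim_quotient_of_le_ker q ?_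
    rintro _ ⟨y, rfl⟩
    exact (Submodule.Quotient.mk_eq_zero _).2 ⟨(0, y), by simp⟩
  -- `coker q` is a quotient of `coker α`: `(a, b) ≡ (a, 0)` modulo `range q`, and
  -- `(α x, 0) ≡ (0, -γ x)` modulo `range (blockTriangular α β γ)`.
  have hs : rk.dim (((M₃ × M₄) ⧸ range (blockTriangular α β γ)) ⧸ range q) ≤
      rk.dim (M₃ ⧸ range α) := by
    refine rk.dim_le_dim_quotient_of_surjective (f := (range q).mkQ ∘ₗ π ∘ₗ inl R M₃ M₄) ?_ ?_
    · intro z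
      obtain ⟨c, rfl⟩ := (range q).mkQ_surjective z
      obtain ⟨⟨a, b⟩, rfl⟩ := mkQ_surjective _ c
      refine ⟨a, ?_⟩
      simp only [comp_apply, inl_apply, mkQ_apply, Submodule.Quotient.eq]
      refine ⟨-b, ?_⟩
      simp [q, π, ← Submodule.Quotient.mk_sub]
    · rintro _ ⟨x, rfl⟩
      simp only [mem_ker, comp_apply, inl_apply, mkQ_apply, Submodule.Quotient.mk_eq_zero]
      refine ⟨-γ x, ?_⟩
      simp only [q, π, comp_apply, inr_apply, mkQ_apply, Submodule.Quotient.eq]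
      exact ⟨(-x, 0), by simp⟩
  rw [rk.dim_eq_r_add_dim_quotient q, add_comm]
  gcongr

lemma add_le_r_blockTriangular_of_dim_ne_top (h₃ : rk.dim M₃ ≠ ⊤) (h₄ : rk.dim M₄ ≠ ⊤) :
    rk.r α + rk.r β ≤ rk.r (blockTriangular α β γ) := by
  have hfin : rk.dim ((M₃ × M₄) ⧸ range (blockTriangular α β γ)) ≠ ⊤ :=
    ne_top_of_le_ne_top (by rw [dim_prod]; exact ENNReal.add_ne_top.2 ⟨h₃, h₄⟩)
      (rk.dim_le_of_surjective (mkQ_surjective _))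
  refine (ENNReal.add_le_add_iff_right hfin).1 ?_
  calc rk.r α + rk.r β + rk.dim ((M₃ × M₄) ⧸ range (blockTriangular α β γ))
      ≤ rk.r α + rk.r β + (rk.dim (M₃ ⧸ range α) + rk.dim (M₄ ⧸ range β)) := by
        gcongr
        exact rk.dim_quotient_range_blockTriangular_le α β γ
    _ = rk.dim M₃ + rk.dim M₄ := by
        rw [rk.dim_eq_r_add_dim_quotient α, rk.dim_eq_r_add_dim_quotient β]
        ring
    _ = rk.r (blockTriangular α β γ) + rk.dim ((M₃ × M₄) ⧸ range (blockTriangular α β γ)) := by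
        rw [← dim_prod, rk.dim_eq_r_add_dim_quotient (blockTriangular α β γ)]

lemma add_le_r_blockTriangular_of_finite [Module.Finite R M₁] [Module.Finite R M₂] :
    rk.r α + rk.r β ≤ rk.r (blockTriangular α β γ) := by
  rw [rk.r_eq_iInf_fg_codRestrict (blockTriangular α β γ)]
  refine le_iInf fun P => ?_
  set S := P.1 ⊔ range (blockTriangular α β γ)
  have hS : S.FG := P.2.sup .of_finite
  have mem (x : M₁ × M₂) : blockTriangular α β γ x ∈ S := mem_sup_right (mem_range_self _ x)
  have := Module.Finite.of_fg (hS.map (LinearMap.fst R M₃ M₄))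
  have := Module.Finite.of_fg (hS.map (LinearMap.snd R M₃ M₄))
  let α' := α.codRestrict (S.map (LinearMap.fst R M₃ M₄)) fun x => ⟨_, mem (x, 0), rfl⟩
  let β' := β.codRestrict (S.map (LinearMap.snd R M₃ M₄)) fun y => ⟨_, mem (0, y), by simp⟩
  let γ' := γ.codRestrict (S.map (LinearMap.snd R M₃ M₄)) fun x => ⟨_, mem (x, 0), by simp⟩
  have hfactor : blockTriangular α' β' γ' =
      (((LinearMap.fst R M₃ M₄).restrict fun _ => mem_map_of_mem).prod
        ((LinearMap.snd R M₃ M₄).restrict fun _ => mem_map_of_mem)) ∘ₗ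
      (blockTriangular α β γ).codRestrict S mem := by
    ext <;> rfl
  calc rk.r α + rk.r β ≤ rk.r α' + rk.r β' :=
        add_le_add (rk.r_comp_le_right α' (Submodule.subtype _))
          (rk.r_comp_le_right β' (Submodule.subtype _))
    _ ≤ rk.r (blockTriangular α' β' γ') :=
        rk.add_le_r_blockTriangular_of_dim_ne_top _ _ _ (rk.dim_lt_top).ne (rk.dim_lt_top).ne
    _ ≤ _ := hfactor ▸ rk.r_comp_le_right _ _

end BlockTriangular

end ExtendedSylvesterMapRank

/-- For an extended Sylvester map rank function `rk` for `R` and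
`R`-module maps `α : M₁ → M₃`, `β : M₂ → M₄`, `γ : M₁ → M₄`, the block upper-triangular
map `[[α, γ], [0, β]] : M₁ ⊕ M₂ → M₃ ⊕ M₄`, `(x, y) ↦ (α x, γ x + β y)`, satisfies
`rk([[α, γ], [0, β]]) ≥ rk(α) + rk(β)`. -/
theorem extendedSylvesterMapRank_blockTriangular (R : Type u) [Ring R]
    (rk : ExtendedSylvesterMapRank R)
    (M₁ M₂ M₃ M₄ : Type u) [AddCommGroup M₁] [Module R M₁] [AddCommGroup M₂] [Module R M₂]
    [AddCommGroup M₃] [Module R M₃] [AddCommGroup M₄] [Module R M₄]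
    (α : M₁ →ₗ[R] M₃) (β : M₂ →ₗ[R] M₄) (γ : M₁ →ₗ[R] M₄) :
    rk.r α + rk.r β ≤
      rk.r ((α.comp (LinearMap.fst R M₁ M₂)).prod
        ((γ.comp (LinearMap.fst R M₁ M₂)) + (β.comp (LinearMap.snd R M₁ M₂)))) := by
  change _ ≤ rk.r (LinearMap.blockTriangular α β γ)
  rw [rk.r_eq_iSup_fg α, rk.r_eq_iSup_fg β]
  refine ENNReal.iSup_add_iSup_le fun P Q => ?_
  have := Module.Finite.of_fg P.2
  have := Module.Finite.of_fg Q.2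
  calc _ ≤ rk.r (LinearMap.blockTriangular (α ∘ₗ P.1.subtype) (β ∘ₗ Q.1.subtype)
          (γ ∘ₗ P.1.subtype)) := rk.add_le_r_blockTriangular_of_finite _ _ _
    _ = rk.r (LinearMap.blockTriangular α β γ ∘ₗ P.1.subtype.prodMap Q.1.subtype) := by
        rw [LinearMap.blockTriangular_comp_prodMap]
    _ ≤ rk.r (LinearMap.blockTriangular α β γ) := rk.r_comp_le_left _ _
end
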